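/- Let ℓ ≥ 2 and g ≥ 3 be integers with g ≤ 2ℓ² − 2. Then the integer Σ_{d | ℓ} μ(ℓ/d) · C(2d² − 2, g), where the sum runs over the positive divisors d of ℓ, is strictly positive. -/

import Mathlib

open ArithmeticFunction
open scoped ArithmeticFunction.Moebius

/-!
Substituting `s = ℓ / d`, the term `s = 1` is `C(2ℓ² − 2, g)` and the others are
`± C(2(ℓ/s)² − 2, g)` with `s ≥ 2`. Since `k ^ g * C(m, g) ≤ C(k m, g)` and
`s² (2(ℓ/s)² − 2) ≤ 2ℓ² − 2`, the term of index `s` is at most `C(2ℓ² − 2, g) / s²`, and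
`∑_{s = 2}^{ℓ} 1 / (s (s − 1)) = 1 − 1/ℓ < 1` shows that the term `s = 1` wins.
-/

namespace Nat

theorem pow_mul_descFactorial_le_descFactorial_mul (k m g : ℕ) :
    k ^ g * m.descFactorial g ≤ (k * m).descFactorial g := by
  induction g with
  | zero => simp
  | succ g ih =>
    rw [descFactorial_succ, descFactorial_succ, pow_succ]
    have hfactor : k * (m - g) ≤ k * m - g := by
      rcases Nat.eq_zero_or_pos k with rfl | hk
      · simp
      rw [Nat.mul_sub]
      have : g ≤ k * g := Nat.le_mul_of_pos_left g hk
      omega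
    calc k ^ g * k * ((m - g) * m.descFactorial g)
        = k * (m - g) * (k ^ g * m.descFactorial g) := by ring
      _ ≤ (k * m - g) * (k * m).descFactorial g := Nat.mul_le_mul hfactor ih

theorem pow_mul_choose_le_choose_mul (k m g : ℕ) :
    k ^ g * m.choose g ≤ (k * m).choose g := by
  have h := pow_mul_descFactorial_le_descFactorial_mul k m g
  rw [descFactorial_eq_factorial_mul_choose, descFactorial_eq_factorial_mul_choose,
    mul_left_comm] at h
  exact Nat.le_of_mul_le_mul_left h g.factorial_pos

end Nat

theorem sum_Icc_two_inv_mul_sub_one (n : ℕ) :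
    ∑ s ∈ Finset.Icc 2 (n + 1), ((s : ℚ) * (s - 1))⁻¹ = 1 - 1 / (n + 1) := by
  induction n with
  | zero => simp
  | succ n ih =>
    rw [Finset.sum_Icc_succ_top (by omega), ih]
    push_cast
    field_simp
    ring

theorem sum_Icc_two_inv_mul_sub_one_lt_one (n : ℕ) :
    ∑ s ∈ Finset.Icc 2 n, ((s : ℚ) * (s - 1))⁻¹ < 1 := by
  rcases n with _ | n
  · simp
  rw [sum_Icc_two_inv_mul_sub_one]
  have : (0 : ℚ) < 1 / (n + 1) := by positivity
  linarith

theorem sum_lt_of_mul_sub_one_mul_le {S : Finset ℕ} {n C : ℕ} {f : ℕ → ℕ}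
    (hS : S ⊆ Finset.Icc 2 n) (hf : ∀ s ∈ S, s * (s - 1) * f s ≤ C) (hC : 0 < C) :
    ∑ s ∈ S, f s < C := by
  have hterm : ∀ s ∈ Finset.Icc 2 n, (0 : ℚ) < s * (s - 1) := by
    intro s hs
    have : (2 : ℚ) ≤ s := by exact_mod_cast (Finset.mem_Icc.mp hs).1
    nlinarith
  have hbound : ∀ s ∈ S, (f s : ℚ) ≤ C * ((s : ℚ) * (s - 1))⁻¹ := by
    intro s hs
    have hs2 : 2 ≤ s := (Finset.mem_Icc.mp (hS hs)).1
    have hq : ((s * (s - 1) * f s : ℕ) : ℚ) ≤ C := by exact_mod_cast hf s hs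
    push_cast [Nat.cast_sub (by omega : 1 ≤ s)] at hq
    rw [← div_eq_mul_inv, le_div_iff₀ (hterm s (hS hs))]
    linarith
  suffices (∑ s ∈ S, f s : ℚ) < C by exact_mod_cast this
  calc (∑ s ∈ S, f s : ℚ)
      ≤ ∑ s ∈ Finset.Icc 2 n, (C : ℚ) * ((s : ℚ) * (s - 1))⁻¹ :=
        (Finset.sum_le_sum hbound).trans <| Finset.sum_le_sum_of_subset_of_nonneg hS
          fun s hs _ => mul_nonneg C.cast_nonneg (inv_pos.mpr (hterm s hs)).le
    _ = C * ∑ s ∈ Finset.Icc 2 n, ((s : ℚ) * (s - 1))⁻¹ := (Finset.mul_sum ..).symm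
    _ < C * 1 :=
        mul_lt_mul_of_pos_left (sum_Icc_two_inv_mul_sub_one_lt_one n) (by exact_mod_cast hC)
    _ = C := mul_one _

theorem mul_sub_one_mul_choose_le {s d g : ℕ} (hg : 1 ≤ g) :
    s * (s - 1) * (2 * d ^ 2 - 2).choose g ≤ (2 * (s * d) ^ 2 - 2).choose g := by
  have hpow : s * (s - 1) ≤ (s ^ 2) ^ g :=
    calc s * (s - 1) ≤ s ^ 2 := by rw [sq]; exact Nat.mul_le_mul_left s (Nat.sub_le s 1)
      _ ≤ (s ^ 2) ^ g := Nat.le_self_pow (by omega) _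
  have hscale : s ^ 2 * (2 * d ^ 2 - 2) ≤ 2 * (s * d) ^ 2 - 2 := by
    rcases Nat.eq_zero_or_pos s with rfl | hs
    · simp
    have : 1 ≤ s ^ 2 := Nat.one_le_pow _ _ hs
    rw [Nat.mul_sub, mul_pow, mul_left_comm]
    omega
  calc s * (s - 1) * (2 * d ^ 2 - 2).choose g
      ≤ (s ^ 2) ^ g * (2 * d ^ 2 - 2).choose g := Nat.mul_le_mul_right _ hpow
    _ ≤ (s ^ 2 * (2 * d ^ 2 - 2)).choose g := Nat.pow_mul_choose_le_choose_mul _ _ _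
    _ ≤ (2 * (s * d) ^ 2 - 2).choose g := Nat.choose_le_choose g hscale

theorem neg_sum_le_sum_moebius_mul (S : Finset ℕ) (f : ℕ → ℕ) :
    -(∑ s ∈ S, (f s : ℤ)) ≤ ∑ s ∈ S, μ s * f s := by
  rw [← Finset.sum_neg_distrib]
  refine Finset.sum_le_sum fun s _ => ?_
  have := (abs_le.mp (abs_moebius_le_one (n := s))).1
  nlinarith [(f s).cast_nonneg (α := ℤ)]

theorem moebius_sum_pos_general (ℓ g : ℕ) (hg : 3 ≤ g) (hgℓ : g ≤ 2 * ℓ ^ 2 - 2) :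
    0 < ∑ d ∈ ℓ.divisors, (μ (ℓ / d) : ℤ) * (Nat.choose (2 * d ^ 2 - 2) g : ℤ) := by
  have hℓ0 : ℓ ≠ 0 := by rintro rfl; omega
  set term : ℕ → ℕ := fun s => (2 * (ℓ / s) ^ 2 - 2).choose g
  have hreindex : ∑ d ∈ ℓ.divisors, (μ (ℓ / d) : ℤ) * (Nat.choose (2 * d ^ 2 - 2) g : ℤ)
      = ∑ s ∈ ℓ.divisors, (μ s : ℤ) * term s := by
    rw [← Nat.sum_div_divisors]
    refine Finset.sum_congr rfl fun d hd => ?_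
    rw [Nat.div_div_self (Nat.dvd_of_mem_divisors hd) hℓ0]
  have htail : ∑ s ∈ ℓ.divisors.erase 1, term s < term 1 := by
    refine sum_lt_of_mul_sub_one_mul_le (n := ℓ) ?_ ?_ ?_
    · intro s hs
      obtain ⟨hs1, hdvd⟩ := Finset.mem_erase.mp hs
      have hpos := Nat.pos_of_mem_divisors hdvd
      exact Finset.mem_Icc.mpr ⟨by omega, Nat.divisor_le hdvd⟩
    · intro s hs
      have hsd : s * (ℓ / s) = ℓ :=
        Nat.mul_div_cancel' (Nat.dvd_of_mem_divisors (Finset.mem_of_mem_erase hs))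
      simpa only [term, Nat.div_one, hsd] using
        mul_sub_one_mul_choose_le (s := s) (d := ℓ / s) (by omega)
    · simpa only [term, Nat.div_one] using Nat.choose_pos hgℓ
  rw [hreindex, ← Finset.add_sum_erase _ _ (Nat.one_mem_divisors.mpr hℓ0), moebius_apply_one,
    one_mul]
  have : (∑ s ∈ ℓ.divisors.erase 1, (term s : ℤ)) < term 1 := by exact_mod_cast htail
  linarith [neg_sum_le_sum_moebius_mul (ℓ.divisors.erase 1) term]

/-- For integers `ℓ ≥ 2` and `g ≥ 3` with `g ≤ 2ℓ² − 2`, the integer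
`Σ_{d | ℓ} μ(ℓ/d) · C(2d² − 2, g)` is strictly positive. -/
theorem moebius_sum_pos (ℓ g : ℕ) (hℓ : 2 ≤ ℓ) (hg : 3 ≤ g) (hgℓ : g ≤ 2 * ℓ ^ 2 - 2) :
    0 < ∑ d ∈ ℓ.divisors, (μ (ℓ / d) : ℤ) * (Nat.choose (2 * d ^ 2 - 2) g : ℤ) :=
  moebius_sum_pos_general ℓ g hg hgℓ
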